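/- For every k ∈ ℕ, the two-dimensional Lebesgue measure of Q_k = Y_k × Y_k equals 2^{−2k}·2^{2m_k}, i.e. μ₂(Q_k) = 2^{2m_k − 2k}. -/

import Mathlib

open MeasureTheory Set ENNReal

/-- The 1-periodic Rademacher function: `1` on `[0, 1/2)`, `-1` on `[1/2, 1)`,
extended 1-periodically to `ℝ`. -/
noncomputable def rade (t : ℝ) : ℝ := if Int.fract t < 1 / 2 then 1 else -1

/-- `Yset m k = {t ∈ [0, 2^{m_k}] : ∑_{j=1}^{k} r₀(t / 2^{m_j}) = k}`. -/
def Yset (m : ℕ → ℕ) (k : ℕ) : Set ℝ :=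
  {t | t ∈ Icc (0 : ℝ) (2 ^ m k) ∧ ∑ j ∈ Finset.Icc 1 k, rade (t / 2 ^ m j) = (k : ℝ)}

/-- The crystal `Q_k = Y_k × Y_k ⊆ ℝ²`. -/
def Qset (m : ℕ → ℕ) (k : ℕ) : Set (ℝ × ℝ) := Yset m k ×ˢ Yset m k

/-!
On `[0, 2^{m_k}]` the sum `∑_{j ≤ k} r₀(t / 2^{m_j})` equals `k` exactly when every term is `1`,
i.e. when `t / 2^{m_j}` lies in the lower half of its unit cell for each `j ≤ k`. The set `A_k`
(`allLowerHalves m k`) of such `t ∈ ℝ` is `2^{m_k}`-periodic because all `m_j ≤ m_k`, and on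
`[0, 2^{m_{k+1}})` the condition for `j = k + 1` just keeps the lower half `[0, 2^{m_{k+1} - 1})`,
which consists of `2^{m_{k+1} - 1 - m_k}` periods of `A_k`. By induction `μ(Y_k) = 2^{m_k} / 2^k`,
and `Q_k` is a product. Since `m_1 = 0` is allowed, `m_k - k` may be negative, so the measure is
handled in the form `μ(Y_k) * 2^k = 2^{m_k}`.
-/

lemma rade_le_one (t : ℝ) : rade t ≤ 1 := by
  unfold rade; split_ifs <;> norm_num

lemma rade_eq_one_iff (t : ℝ) : rade t = 1 ↔ Int.fract t < 1 / 2 := by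
  unfold rade; split_ifs with h <;> norm_num [h]

lemma sum_rade_eq_card_iff {ι : Type*} (s : Finset ι) (f : ι → ℝ) :
    ∑ j ∈ s, rade (f j) = s.card ↔ ∀ j ∈ s, Int.fract (f j) < 1 / 2 := by
  have h := Finset.sum_eq_sum_iff_of_le (s := s) (g := fun _ ↦ (1 : ℝ)) fun j _ ↦ rade_le_one (f j)
  simpa only [Finset.sum_const, nsmul_eq_mul, mul_one, rade_eq_one_iff] using h

/-- The points where the Rademacher function of period `P` equals `1`. -/
def lowerHalves (P : ℝ) : Set ℝ := {t | Int.fract (t / P) < 1 / 2}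

def allLowerHalves (m : ℕ → ℕ) (k : ℕ) : Set ℝ := ⋂ j ∈ Finset.Icc 1 k, lowerHalves (2 ^ m j)

lemma measurableSet_lowerHalves (P : ℝ) : MeasurableSet (lowerHalves P) :=
  measurableSet_lt (measurable_id.div_const P).fract measurable_const

lemma measurableSet_allLowerHalves (m : ℕ → ℕ) (k : ℕ) : MeasurableSet (allLowerHalves m k) :=
  .biInter (Finset.Icc 1 k).countable_toSet fun _ _ ↦ measurableSet_lowerHalves _

lemma Yset_eq (m : ℕ → ℕ) (k : ℕ) : Yset m k = allLowerHalves m k ∩ Icc 0 (2 ^ m k) := by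
  have hcard : ((Finset.Icc 1 k).card : ℝ) = k := by simp
  ext t
  simp only [Yset, allLowerHalves, lowerHalves, mem_ofPred_eq, mem_inter_iff, mem_iInter,
    ← hcard, sum_rade_eq_card_iff]
  tauto

lemma allLowerHalves_zero (m : ℕ → ℕ) : allLowerHalves m 0 = univ := by
  simp [allLowerHalves]

lemma allLowerHalves_succ (m : ℕ → ℕ) (k : ℕ) :
    allLowerHalves m (k + 1) = allLowerHalves m k ∩ lowerHalves (2 ^ m (k + 1)) := by
  rw [allLowerHalves, allLowerHalves, ← Finset.insert_Icc_right_eq_Icc_add_one (by omega),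
    Finset.set_biInter_insert, inter_comm]

lemma periodic_mem_lowerHalves {P : ℝ} (hP : P ≠ 0) (n : ℕ) :
    Function.Periodic (· ∈ lowerHalves P) (n * P) := fun t ↦ by
  simp only [lowerHalves, mem_ofPred_eq, add_div, mul_div_cancel_right₀ _ hP, Int.fract_add_natCast]

lemma periodic_mem_allLowerHalves (m : ℕ → ℕ) (hmono : MonotoneOn m (Ici 1)) (k : ℕ) :
    Function.Periodic (· ∈ allLowerHalves m k) (2 ^ m k) := fun t ↦ by
  simp only [allLowerHalves, mem_iInter]
  refine propext <| forall₂_congr fun j hj ↦ ?_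
  obtain ⟨hj1, hjk⟩ := Finset.mem_Icc.mp hj
  have hperiod : (2 : ℝ) ^ m k = ((2 ^ (m k - m j) : ℕ) : ℝ) * 2 ^ m j := by
    rw [Nat.cast_pow, Nat.cast_two, ← pow_add,
      Nat.sub_add_cancel (hmono hj1 (le_trans hj1 hjk) hjk)]
  rw [hperiod]
  exact .of_eq (periodic_mem_lowerHalves (by positivity) _ t)

lemma volume_inter_Ico_nat_mul {A : Set ℝ} (hA : MeasurableSet A) {P : ℝ} (hP : 0 ≤ P)
    (hper : Function.Periodic (· ∈ A) P) (N : ℕ) :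
    volume (A ∩ Ico 0 (N * P)) = N * volume (A ∩ Ico 0 P) := by
  induction N with
  | zero => simp
  | succ n ih =>
    have hshift : (· + n * P) ⁻¹' (A ∩ Ico (n * P) ((n + 1) * P)) = A ∩ Ico 0 P := by
      ext t
      simp only [mem_preimage, mem_inter_iff, mem_Ico, (hper.nat_mul n t).to_iff]
      constructor <;> rintro ⟨hA, h0, h1⟩ <;> exact ⟨hA, by linarith, by linarith⟩
    have hsplit : Ico 0 ((n + 1 : ℕ) * P) = Ico 0 (n * P) ∪ Ico (n * P) ((n + 1) * P) := by
      push_cast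
      exact (Ico_union_Ico_eq_Ico (by positivity) (by nlinarith)).symm
    rw [hsplit, inter_union_distrib_left, measure_union (disjoint_left.2 fun x hx hx' ↦
        (not_le.2 hx.2.2) hx'.2.1) (hA.inter measurableSet_Ico), ih, ← hshift,
      measure_preimage_add_right]
    push_cast
    ring

lemma lowerHalves_inter_Ico {P : ℝ} (hP : 0 < P) : lowerHalves P ∩ Ico 0 P = Ico 0 (P / 2) := by
  ext t
  simp only [lowerHalves, mem_inter_iff, mem_ofPred_eq, mem_Ico]
  constructor
  · rintro ⟨hhalf, h0, hP'⟩
    rw [Int.fract_eq_self.2 ⟨by positivity, (div_lt_one hP).2 hP'⟩, div_lt_iff₀ hP] at hhalf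
    exact ⟨h0, by linarith⟩
  · rintro ⟨h0, hhalf⟩
    rw [Int.fract_eq_self.2 ⟨by positivity, (div_lt_one hP).2 (by linarith)⟩, div_lt_iff₀ hP]
    exact ⟨by linarith, h0, by linarith⟩

lemma allLowerHalves_succ_inter_Ico (m : ℕ → ℕ) (k : ℕ) :
    allLowerHalves m (k + 1) ∩ Ico 0 (2 ^ m (k + 1)) =
      allLowerHalves m k ∩ Ico 0 (2 ^ m (k + 1) / 2) := by
  rw [allLowerHalves_succ, inter_assoc, lowerHalves_inter_Ico (by positivity)]

lemma volume_allLowerHalves_inter_Ico_mul_two_pow (m : ℕ → ℕ)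
    (hmono : ∀ j, 1 ≤ j → m j < m (j + 1)) {k : ℕ} (hk : 1 ≤ k) :
    volume (allLowerHalves m k ∩ Ico 0 (2 ^ m k)) * 2 ^ k = 2 ^ m k := by
  induction k, hk using Nat.le_induction with
  | base =>
    rw [allLowerHalves_succ_inter_Ico m 0, allLowerHalves_zero, univ_inter, Real.volume_Ico,
      sub_zero, pow_one, ← ENNReal.ofReal_ofNat 2, ← ENNReal.ofReal_mul (by positivity),
      div_mul_cancel₀ _ two_ne_zero, ENNReal.ofReal_pow zero_le_two, ENNReal.ofReal_ofNat]
  | succ k hk ih =>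
    have hlt := hmono k hk
    have hhalf : (2 : ℝ) ^ m (k + 1) / 2 = ((2 ^ (m (k + 1) - 1 - m k) : ℕ) : ℝ) * 2 ^ m k := by
      rw [Nat.cast_pow, Nat.cast_two, ← pow_add, div_eq_iff two_ne_zero, ← pow_succ]
      congr 1
      omega
    have hmonoOn : MonotoneOn m (Ici 1) :=
      monotoneOn_of_le_add_one ordConnected_Ici fun j _ hj _ ↦ (hmono j hj).le
    rw [allLowerHalves_succ_inter_Ico, hhalf, volume_inter_Ico_nat_mul
      (measurableSet_allLowerHalves m k) (by positivity) (periodic_mem_allLowerHalves m hmonoOn k),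
      pow_succ, ← mul_assoc, mul_assoc _ _ (2 ^ k), ih, Nat.cast_pow, Nat.cast_two, ← pow_add,
      ← pow_succ]
    congr 1
    omega

lemma volume_Yset_mul_two_pow (m : ℕ → ℕ) (hmono : ∀ j, 1 ≤ j → m j < m (j + 1)) (k : ℕ) :
    volume (Yset m k) * 2 ^ k = 2 ^ m k := by
  rw [Yset_eq, ← measure_congr ((Filter.EventuallyEq.refl _ _).inter Ico_ae_eq_Icc)]
  rcases Nat.eq_zero_or_pos k with rfl | hk
  · rw [allLowerHalves_zero, univ_inter, Real.volume_Ico, sub_zero, pow_zero, mul_one,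
      ENNReal.ofReal_pow zero_le_two, ENNReal.ofReal_ofNat]
  · exact volume_allLowerHalves_inter_Ico_mul_two_pow m hmono hk

/-- For a strictly increasing sequence of naturals `m_1 < m_2 < ⋯`, the crystal `Q_k`
has two-dimensional Lebesgue measure `2^{2 m_k - 2k} = 2^{-2k}·2^{2 m_k}`. -/
theorem statement6 (m : ℕ → ℕ) (hmono : ∀ j, 1 ≤ j → m j < m (j + 1)) (k : ℕ) :
    volume (Qset m k) = 2 ^ (2 * m k) / 2 ^ (2 * k) := by
  rw [Qset, Measure.volume_eq_prod, Measure.prod_prod,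
    ENNReal.eq_div_iff (by positivity) (pow_ne_top ofNat_ne_top)]
  calc 2 ^ (2 * k) * (volume (Yset m k) * volume (Yset m k))
      = (volume (Yset m k) * 2 ^ k) ^ 2 := by ring
    _ = 2 ^ (2 * m k) := by rw [volume_Yset_mul_two_pow m hmono, ← pow_mul, mul_comm]
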